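/- (Proposition 3) Let Sᵢ, Sⱼ be symmetric positive definite matrices, τᵢ, τⱼ > 0, Γᵢ, Γⱼ, Mᵢ, Mⱼ matrices of compatible sizes, and Hᵢ ∈ ℝ^{m×n_{xᵢ}}, Hⱼ ∈ ℝ^{m×n_{xⱼ}} with rows hᵢ,₁ᵀ,…,hᵢ,ₘᵀ and hⱼ,₁ᵀ,…,hⱼ,ₘᵀ respectively. Let μ_d^i, μ_d^j ∈ ℝ^m and reals c̃, c satisfy: (i) (μ_d^i)_{m̄} ≥ √τᵢ·‖ΓᵢᵀMᵢᵀhᵢ,_{m̄}‖_{Sᵢ⁻¹} and (μ_d^j)_{m̄} ≥ √τⱼ·‖ΓⱼᵀMⱼᵀhⱼ,_{m̄}‖_{Sⱼ⁻¹} for every m̄ = 1,…,m; and (ii) ‖μ_d^i + μ_d^j‖₂ ≤ c̃ − c. Then for all ζᵢ ∈ Uᵢ = { Γᵢz : zᵀSᵢz ≤ τᵢ } and ζⱼ ∈ Uⱼ = { Γⱼz : zᵀSⱼz ≤ τⱼ }: ‖HᵢMᵢζᵢ − HⱼMⱼζⱼ‖₂ ≤ c̃ − c. -/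

import Mathlib

/-!
Each coordinate of `HMΓz` is a linear functional `v ⬝ᵥ z` of the uncertainty parameter, and by
Cauchy–Schwarz in the inner product defined by `S` it is at most `√τ ‖v‖_{S⁻¹}` in absolute value
on the ellipsoid `zᵀSz ≤ τ`. Hence the `m̄`-th coordinate of the difference is bounded in absolute
value by `(μ_d^i)_{m̄} + (μ_d^j)_{m̄}`, and the Euclidean norms compare coordinatewise.
-/

open Matrix

theorem Matrix.PosSemidef.dotProduct_mulVec_sq_le {n : Type*} [Fintype n]
    {S : Matrix n n ℝ} (hS : S.PosSemidef) (x y : n → ℝ) :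
    (x ⬝ᵥ S *ᵥ y) ^ 2 ≤ (x ⬝ᵥ S *ᵥ x) * (y ⬝ᵥ S *ᵥ y) := by
  let _ := S.toSeminormedAddCommGroup hS
  let _ := S.toInnerProductSpace hS
  have h := real_inner_mul_inner_self_le x y
  change (S *ᵥ y ⬝ᵥ star x) * (S *ᵥ y ⬝ᵥ star x) ≤ (S *ᵥ x ⬝ᵥ star x) * (S *ᵥ y ⬝ᵥ star y) at h
  simpa only [star_trivial, dotProduct_comm _ x, dotProduct_comm _ y, sq] using h

theorem Matrix.PosDef.dotProduct_sq_le {n : Type*} [Fintype n] [DecidableEq n]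
    {S : Matrix n n ℝ} (hS : S.PosDef) (v z : n → ℝ) :
    (v ⬝ᵥ z) ^ 2 ≤ (v ⬝ᵥ S⁻¹ *ᵥ v) * (z ⬝ᵥ S *ᵥ z) := by
  have hSv : S *ᵥ (S⁻¹ *ᵥ v) = v := by
    rw [mulVec_mulVec, mul_nonsing_inv S hS.det_pos.ne'.isUnit, one_mulVec]
  have hcross : S⁻¹ *ᵥ v ⬝ᵥ S *ᵥ z = v ⬝ᵥ z := by
    rw [dotProduct_mulVec, ← mulVec_transpose, (isHermitian_iff_isSymm.mp hS.isHermitian).eq, hSv]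
  have h := hS.posSemidef.dotProduct_mulVec_sq_le (S⁻¹ *ᵥ v) z
  rwa [hcross, hSv, dotProduct_comm (S⁻¹ *ᵥ v)] at h

theorem Matrix.PosDef.abs_dotProduct_le {n : Type*} [Fintype n] [DecidableEq n]
    {S : Matrix n n ℝ} (hS : S.PosDef) {τ : ℝ} {z : n → ℝ} (hz : z ⬝ᵥ S *ᵥ z ≤ τ)
    (v : n → ℝ) :
    |v ⬝ᵥ z| ≤ √τ * √(v ⬝ᵥ S⁻¹ *ᵥ v) := by
  have hq : 0 ≤ v ⬝ᵥ S⁻¹ *ᵥ v := hS.inv.posSemidef.dotProduct_mulVec_nonneg v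
  rw [← Real.sqrt_mul' τ hq]
  apply Real.abs_le_sqrt
  calc (v ⬝ᵥ z) ^ 2 ≤ (v ⬝ᵥ S⁻¹ *ᵥ v) * (z ⬝ᵥ S *ᵥ z) := hS.dotProduct_sq_le v z
    _ ≤ (v ⬝ᵥ S⁻¹ *ᵥ v) * τ := mul_le_mul_of_nonneg_left hz hq
    _ = τ * (v ⬝ᵥ S⁻¹ *ᵥ v) := mul_comm _ _

theorem Matrix.mul_mulVec_mulVec_apply {k n p q R : Type*} [Fintype n] [Fintype p] [Fintype q]
    [CommSemiring R] (H : Matrix k n R) (M : Matrix n p R) (Γ : Matrix p q R) (z : q → R)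
    (i : k) :
    ((H * M) *ᵥ (Γ *ᵥ z)) i = (Γᵀ *ᵥ (Mᵀ *ᵥ H i)) ⬝ᵥ z := by
  rw [mulVec_transpose, mulVec_transpose, ← dotProduct_mulVec, ← mul_apply_eq_vecMul]
  rfl

theorem Real.sqrt_sum_sq_le_of_abs_le {ι : Type*} {s : Finset ι} {x y : ι → ℝ}
    (h : ∀ i ∈ s, |x i| ≤ y i) :
    √(∑ i ∈ s, x i ^ 2) ≤ √(∑ i ∈ s, y i ^ 2) := by
  refine Real.sqrt_le_sqrt (Finset.sum_le_sum fun i hi => ?_)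
  obtain ⟨hlo, hhi⟩ := abs_le.mp (h i hi)
  exact sq_le_sq' hlo hhi

theorem stmt_10_general {nζi nbari nxi nζj nbarj nxj m : ℕ}
    (Si : Matrix (Fin nbari) (Fin nbari) ℝ) (hSi : Si.PosDef)
    (Sj : Matrix (Fin nbarj) (Fin nbarj) ℝ) (hSj : Sj.PosDef)
    (τi τj : ℝ)
    (Γi : Matrix (Fin nζi) (Fin nbari) ℝ) (Γj : Matrix (Fin nζj) (Fin nbarj) ℝ)
    (Mi : Matrix (Fin nxi) (Fin nζi) ℝ) (Mj : Matrix (Fin nxj) (Fin nζj) ℝ)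
    (Hi : Matrix (Fin m) (Fin nxi) ℝ) (Hj : Matrix (Fin m) (Fin nxj) ℝ)
    (μdi μdj : Fin m → ℝ) (ctilde c : ℝ)
    (hμdi : ∀ mb : Fin m,
      Real.sqrt τi * Real.sqrt ((Γiᵀ.mulVec (Miᵀ.mulVec (Hi mb))) ⬝ᵥ
        Si⁻¹.mulVec (Γiᵀ.mulVec (Miᵀ.mulVec (Hi mb)))) ≤ μdi mb)
    (hμdj : ∀ mb : Fin m,
      Real.sqrt τj * Real.sqrt ((Γjᵀ.mulVec (Mjᵀ.mulVec (Hj mb))) ⬝ᵥ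
        Sj⁻¹.mulVec (Γjᵀ.mulVec (Mjᵀ.mulVec (Hj mb)))) ≤ μdj mb)
    (hnorm : Real.sqrt (∑ mb, (μdi mb + μdj mb) ^ 2) ≤ ctilde - c) :
    ∀ zi : Fin nbari → ℝ, zi ⬝ᵥ Si.mulVec zi ≤ τi →
      ∀ zj : Fin nbarj → ℝ, zj ⬝ᵥ Sj.mulVec zj ≤ τj →
        Real.sqrt (∑ i, ((Hi * Mi).mulVec (Γi.mulVec zi) i -
            (Hj * Mj).mulVec (Γj.mulVec zj) i) ^ 2) ≤ ctilde - c := by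
  intro zi hzi zj hzj
  refine (Real.sqrt_sum_sq_le_of_abs_le fun k _ => ?_).trans hnorm
  rw [mul_mulVec_mulVec_apply, mul_mulVec_mulVec_apply]
  exact (abs_sub _ _).trans (add_le_add ((hSi.abs_dotProduct_le hzi _).trans (hμdi k))
    ((hSj.abs_dotProduct_le hzj _).trans (hμdj k)))

/-- Proposition 3: under the SOCP conditions on `μ_d^i`, `μ_d^j`, the deviation
`‖HᵢMᵢζᵢ − HⱼMⱼζⱼ‖₂` is at most `c̃ − c` for all `ζᵢ ∈ Uᵢ`, `ζⱼ ∈ Uⱼ`. -/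
theorem stmt_10 {nζi nbari nxi nζj nbarj nxj m : ℕ}
    (Si : Matrix (Fin nbari) (Fin nbari) ℝ) (hSi : Si.PosDef)
    (Sj : Matrix (Fin nbarj) (Fin nbarj) ℝ) (hSj : Sj.PosDef)
    (τi τj : ℝ) (hτi : 0 < τi) (hτj : 0 < τj)
    (Γi : Matrix (Fin nζi) (Fin nbari) ℝ) (Γj : Matrix (Fin nζj) (Fin nbarj) ℝ)
    (Mi : Matrix (Fin nxi) (Fin nζi) ℝ) (Mj : Matrix (Fin nxj) (Fin nζj) ℝ)
    (Hi : Matrix (Fin m) (Fin nxi) ℝ) (Hj : Matrix (Fin m) (Fin nxj) ℝ)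
    (μdi μdj : Fin m → ℝ) (ctilde c : ℝ)
    (hμdi : ∀ mb : Fin m,
      Real.sqrt τi * Real.sqrt ((Γiᵀ.mulVec (Miᵀ.mulVec (Hi mb))) ⬝ᵥ
        Si⁻¹.mulVec (Γiᵀ.mulVec (Miᵀ.mulVec (Hi mb)))) ≤ μdi mb)
    (hμdj : ∀ mb : Fin m,
      Real.sqrt τj * Real.sqrt ((Γjᵀ.mulVec (Mjᵀ.mulVec (Hj mb))) ⬝ᵥ
        Sj⁻¹.mulVec (Γjᵀ.mulVec (Mjᵀ.mulVec (Hj mb)))) ≤ μdj mb)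
    (hnorm : Real.sqrt (∑ mb, (μdi mb + μdj mb) ^ 2) ≤ ctilde - c) :
    ∀ zi : Fin nbari → ℝ, zi ⬝ᵥ Si.mulVec zi ≤ τi →
      ∀ zj : Fin nbarj → ℝ, zj ⬝ᵥ Sj.mulVec zj ≤ τj →
        Real.sqrt (∑ i, ((Hi * Mi).mulVec (Γi.mulVec zi) i -
            (Hj * Mj).mulVec (Γj.mulVec zj) i) ^ 2) ≤ ctilde - c :=
  stmt_10_general Si hSi Sj hSj τi τj Γi Γj Mi Mj Hi Hj μdi μdj ctilde c hμdi hμdj hnorm
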